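/- Let M be a maximum matching in a graph G and X the set of vertices not covered by M with |X| ≥ 2. Then the number of non-adjacent pairs (non-edges) of G within V(M) ∪ X is at least C(|X|,2) + |M|·|X|. -/

import Mathlib

open SimpleGraph Set

section Aux

variable {V : Type*}

lemma matching_edge_eq {G : SimpleGraph V} {M : G.Subgraph} (hM : M.IsMatching)
    {e e' : Sym2 V} (he : e ∈ M.edgeSet) (he' : e' ∈ M.edgeSet) {v : V}
    (hv : v ∈ e) (hv' : v ∈ e') : e = e' := by
  obtain ⟨w, rfl⟩ : ∃ w, s(v, w) = e := ⟨Sym2.Mem.other hv, Sym2.other_spec hv⟩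
  obtain ⟨w', rfl⟩ : ∃ w', s(v, w') = e' := ⟨Sym2.Mem.other hv', Sym2.other_spec hv'⟩
  rw [SimpleGraph.Subgraph.mem_edgeSet] at he he'
  obtain ⟨u, -, hu⟩ := hM (M.edge_vert he)
  rw [hu w he, hu w' he']

variable [Fintype V]

lemma indep_non_adj {G : SimpleGraph V} {M : G.Subgraph}
    (hM : M.IsMatching)
    (hmax : ∀ M' : G.Subgraph, M'.IsMatching → M'.edgeSet.ncard ≤ M.edgeSet.ncard)
    {x y : V} (hx : x ∉ M.verts) (hy : y ∉ M.verts) : ¬ G.Adj x y := by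
  intro hadj
  have hd : Disjoint M.support (G.subgraphOfAdj hadj).support := by
    rw [hM.support_eq_verts, SimpleGraph.support_subgraphOfAdj, Set.disjoint_left]
    rintro a ha h
    rcases h with rfl | rfl
    · exact hx ha
    · exact hy ha
  have hm' := hmax _ (hM.sup (SimpleGraph.Subgraph.IsMatching.subgraphOfAdj hadj) hd)
  have hnot : s(x, y) ∉ M.edgeSet := fun hmem =>
    hx (M.mem_verts_of_mem_edge hmem (Sym2.mem_mk_left _ _))
  rw [SimpleGraph.Subgraph.edgeSet_sup, SimpleGraph.edgeSet_subgraphOfAdj,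
    Set.union_singleton, Set.ncard_insert_of_notMem hnot (Set.toFinite _)] at hm'
  omega

lemma exchange_contra {G : SimpleGraph V} {M : G.Subgraph}
    (hM : M.IsMatching)
    (hmax : ∀ M' : G.Subgraph, M'.IsMatching → M'.edgeSet.ncard ≤ M.edgeSet.ncard)
    {y z x1 x2 : V} (hyz : M.Adj y z) (hx1 : x1 ∉ M.verts) (hx2 : x2 ∉ M.verts)
    (h12 : x1 ≠ x2) (ha1 : G.Adj y x1) (ha2 : G.Adj z x2) : False := by
  classical
  have hy : y ∈ M.verts := M.edge_vert hyz
  have hz : z ∈ M.verts := M.edge_vert hyz.symm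
  have hne : y ≠ z := (M.adj_sub hyz).ne
  set M0 := M.deleteVerts {y, z} with hM0def
  have hM0adj : ∀ {a b : V}, M0.Adj a b ↔
      (M.Adj a b ∧ a ∉ ({y, z} : Set V) ∧ b ∉ ({y, z} : Set V)) := by
    intro a b
    rw [hM0def, SimpleGraph.Subgraph.deleteVerts_adj]
    constructor
    · rintro ⟨_, h1, _, h2, h3⟩; exact ⟨h3, h1, h2⟩
    · rintro ⟨h3, h1, h2⟩; exact ⟨M.edge_vert h3, h1, M.edge_vert h3.symm, h2, h3⟩
  have hM0 : M0.IsMatching := by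
    rintro v hv
    rw [hM0def, SimpleGraph.Subgraph.deleteVerts_verts] at hv
    obtain ⟨hvM, hvns⟩ := hv
    obtain ⟨w, hw, hwu⟩ := hM hvM
    have hwns : w ∉ ({y, z} : Set V) := by
      rintro (rfl | rfl)
      · obtain ⟨u, -, huu⟩ := hM hy
        exact hvns (by simp [(huu v hw.symm).trans (huu z hyz).symm])
      · obtain ⟨u, -, huu⟩ := hM hz
        exact hvns (by simp [(huu v hw.symm).trans (huu y hyz.symm).symm])
    exact ⟨w, hM0adj.mpr ⟨hw, hvns, hwns⟩, fun w' hw' => hwu w' (hM0adj.mp hw').1⟩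
  have hd1 : Disjoint M0.support (G.subgraphOfAdj ha1).support := by
    rw [SimpleGraph.support_subgraphOfAdj, Set.disjoint_left]
    intro a ha hmem
    obtain ⟨b, hb⟩ := (SimpleGraph.Subgraph.mem_support _).mp ha
    obtain ⟨hb1, hb2, -⟩ := hM0adj.mp hb
    have haM : a = y ∨ a = x1 := by
      rcases hmem with h | h
      · exact Or.inl h
      · exact Or.inr h
    rcases haM with h | h
    · exact hb2 (by simp [h])
    · exact hx1 (by rw [← h]; exact M.edge_vert hb1)
  have hmA := hM0.sup (SimpleGraph.Subgraph.IsMatching.subgraphOfAdj ha1) hd1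
  have hd2 : Disjoint (M0 ⊔ G.subgraphOfAdj ha1).support (G.subgraphOfAdj ha2).support := by
    rw [SimpleGraph.support_subgraphOfAdj, Set.disjoint_left]
    intro a ha hmem
    obtain ⟨b, hb⟩ := (SimpleGraph.Subgraph.mem_support _).mp ha
    rw [SimpleGraph.Subgraph.sup_adj] at hb
    have haM : a = z ∨ a = x2 := by
      rcases hmem with h | h
      · exact Or.inl h
      · exact Or.inr h
    rcases hb with hb | hb
    · obtain ⟨hb1, hb2, -⟩ := hM0adj.mp hb
      rcases haM with h | h
      · exact hb2 (by simp [h])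
      · exact hx2 (by rw [← h]; exact M.edge_vert hb1)
    · rw [SimpleGraph.subgraphOfAdj_adj] at hb
      rcases Sym2.eq_iff.mp hb with ⟨h1, -⟩ | ⟨-, h1⟩
      · rcases haM with h | h
        · exact hne (h1.trans h)
        · exact hx2 (by rw [← h, ← h1]; exact hy)
      · rcases haM with h | h
        · exact hx1 (by rw [h1, h]; exact hz)
        · exact h12 (h1.trans h)
  have hm' := hmax _ (hmA.sup (SimpleGraph.Subgraph.IsMatching.subgraphOfAdj ha2) hd2)
  have hE0 : M0.edgeSet = M.edgeSet \ {s(y, z)} := by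
    ext e
    induction e using Sym2.ind with
    | _ a b =>
      rw [SimpleGraph.Subgraph.mem_edgeSet, hM0adj, Set.mem_diff,
        SimpleGraph.Subgraph.mem_edgeSet, Set.mem_singleton_iff]
      constructor
      · rintro ⟨hab, hans, hbns⟩
        refine ⟨hab, fun hE => ?_⟩
        rcases Sym2.eq_iff.mp hE with ⟨rfl, rfl⟩ | ⟨rfl, rfl⟩
        · exact hans (by simp)
        · exact hans (by simp)
      · rintro ⟨hab, hne'⟩
        refine ⟨hab, ?_, ?_⟩
        · intro hmem
          apply hne'
          have haM : a = y ∨ a = z := by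
            rcases hmem with h | h
            · exact Or.inl h
            · exact Or.inr h
          rcases haM with h | h
          · obtain ⟨u, -, huu⟩ := hM hy
            have hb : b = z := (huu b (by rw [← h]; exact hab)).trans (huu z hyz).symm
            rw [h, hb]
          · obtain ⟨u, -, huu⟩ := hM hz
            have hb : b = y := (huu b (by rw [← h]; exact hab)).trans (huu y hyz.symm).symm
            rw [h, hb, Sym2.eq_swap]
        · intro hmem
          apply hne'
          have hbM : b = y ∨ b = z := by
            rcases hmem with h | h
            · exact Or.inl h
            · exact Or.inr h
          rcases hbM with h | h
          · obtain ⟨u, -, huu⟩ := hM hy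
            have ha' : a = z := (huu a (by rw [← h]; exact hab.symm)).trans (huu z hyz).symm
            rw [h, ha', Sym2.eq_swap]
          · obtain ⟨u, -, huu⟩ := hM hz
            have ha' : a = y := (huu a (by rw [← h]; exact hab.symm)).trans (huu y hyz.symm).symm
            rw [h, ha']
  have hEM' : ((M0 ⊔ G.subgraphOfAdj ha1) ⊔ G.subgraphOfAdj ha2).edgeSet
      = insert s(z, x2) (insert s(y, x1) (M.edgeSet \ {s(y, z)})) := by
    rw [SimpleGraph.Subgraph.edgeSet_sup, SimpleGraph.Subgraph.edgeSet_sup, hE0,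
      SimpleGraph.edgeSet_subgraphOfAdj, SimpleGraph.edgeSet_subgraphOfAdj,
      Set.union_singleton, Set.union_singleton]
  have hyx1 : s(y, x1) ∉ M.edgeSet \ {s(y, z)} := fun h =>
    hx1 (M.mem_verts_of_mem_edge h.1 (Sym2.mem_mk_right _ _))
  have hzx2 : s(z, x2) ∉ insert s(y, x1) (M.edgeSet \ {s(y, z)}) := by
    intro h
    rcases Set.mem_insert_iff.mp h with h | h
    · rcases Sym2.eq_iff.mp h with ⟨h1, -⟩ | ⟨h1, -⟩
      · exact hne h1.symm
      · exact hx1 (by rw [← h1]; exact hz)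
    · exact hx2 (M.mem_verts_of_mem_edge h.1 (Sym2.mem_mk_right _ _))
  have hyzmem : s(y, z) ∈ M.edgeSet := SimpleGraph.Subgraph.mem_edgeSet.mpr hyz
  have hpos : 0 < M.edgeSet.ncard := (Set.ncard_pos (Set.toFinite _)).mpr ⟨_, hyzmem⟩
  rw [hEM', Set.ncard_insert_of_notMem hzx2 (Set.toFinite _),
    Set.ncard_insert_of_notMem hyx1 (Set.toFinite _),
    Set.ncard_diff_singleton_of_mem hyzmem] at hm'
  omega

open Classical in
/-- The choice function sending a pair (matching edge, uncovered vertex) to a non-edge. -/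
noncomputable def gfun (G : SimpleGraph V) (X : Set V) (w0 : V → V)
    (p : Sym2 V × V) : Sym2 V :=
  if hy : ∃ x' ∈ X, G.Adj p.1.out.1 x' then
    if _hz : ∃ x' ∈ X, G.Adj p.1.out.2 x' then
      if p.2 = hy.choose then s(p.1.out.2, w0 hy.choose) else s(p.1.out.1, p.2)
    else s(p.1.out.2, p.2)
  else s(p.1.out.1, p.2)

end Aux

/-- If M is a maximum matching in G and X (the set of uncovered vertices) has at least
two elements, then the number of non-edges of G within V(M) ∪ X is at least
C(|X|,2) + |M|·|X|. Non-edges of G are exactly the edges of the complement Gᶜ. -/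
theorem stmt_13 {V : Type*} [Fintype V] (G : SimpleGraph V) (M : G.Subgraph)
    (hM : M.IsMatching)
    (hmax : ∀ M' : G.Subgraph, M'.IsMatching → M'.edgeSet.ncard ≤ M.edgeSet.ncard)
    (X : Set V) (hX : X = M.vertsᶜ) (hX2 : 2 ≤ X.ncard) :
    Nat.choose X.ncard 2 + M.edgeSet.ncard * X.ncard ≤
      {e : Sym2 V | e ∈ Gᶜ.edgeSet ∧ ∀ v ∈ e, v ∈ M.verts ∪ X}.ncard := by
  classical
  subst hX
  set X : Set V := M.vertsᶜ with hXdef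
  have hXmem : ∀ a : V, a ∈ X → a ∉ M.verts := fun a ha => ha
  have hT : {e : Sym2 V | e ∈ Gᶜ.edgeSet ∧ ∀ v ∈ e, v ∈ M.verts ∪ X} = Gᶜ.edgeSet := by
    ext e
    simp [hXdef, Set.union_compl_self]
  rw [hT]
  set T1 := {s : Sym2 V | s ∈ Gᶜ.edgeSet ∧ ∀ v ∈ s, v ∈ X} with hT1
  set T2 := {s : Sym2 V | s ∈ Gᶜ.edgeSet ∧ ∃ v ∈ s, v ∈ M.verts} with hT2
  have hsub : T1 ∪ T2 ⊆ Gᶜ.edgeSet := by rintro s (hs | hs) <;> exact hs.1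
  have hdisj : Disjoint T1 T2 := by
    rw [Set.disjoint_left]
    rintro s ⟨-, h1⟩ ⟨-, v, hv, hvM⟩
    exact (h1 v hv) hvM
  have hkey : T1.ncard + T2.ncard ≤ Gᶜ.edgeSet.ncard := by
    rw [← Set.ncard_union_eq hdisj (Set.toFinite _) (Set.toFinite _)]
    exact Set.ncard_le_ncard hsub (Set.toFinite _)
  have hb1 : Nat.choose X.ncard 2 ≤ T1.ncard := by
    haveI : Fintype ↥X := Fintype.ofFinite _
    have hcard : Fintype.card ↥X = X.ncard := by
      rw [Set.ncard_eq_toFinset_card', Set.toFinset_card]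
    have htop : ((⊤ : SimpleGraph ↥X).edgeSet).ncard = Nat.choose X.ncard 2 := by
      rw [← Nat.card_coe_set_eq, Nat.card_eq_fintype_card, ← SimpleGraph.edgeFinset_card,
        SimpleGraph.card_edgeFinset_top_eq_card_choose_two, hcard]
    rw [← htop]
    refine Set.ncard_le_ncard_of_injOn (Sym2.map (Subtype.val : ↥X → V)) ?_
      ((Sym2.map.injective Subtype.val_injective).injOn) (Set.toFinite _)
    intro e he
    induction e using Sym2.ind with
    | _ a b =>
      rw [Sym2.map_pair_eq]
      have hab : (a : V) ≠ b := fun h =>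
        (SimpleGraph.top_adj a b).mp ((SimpleGraph.mem_edgeSet _).mp he)
          (Subtype.val_injective h)
      refine ⟨(SimpleGraph.mem_edgeSet _).mpr ((G.compl_adj _ _).mpr
        ⟨hab, indep_non_adj hM hmax (hXmem _ a.2) (hXmem _ b.2)⟩), ?_⟩
      intro v hv
      rcases Sym2.mem_iff.mp hv with rfl | rfl
      · exact a.2
      · exact b.2
  have hb2 : M.edgeSet.ncard * X.ncard ≤ T2.ncard := by
    have hX2' : 1 < X.ncard := hX2
    set w0 : V → V := fun a => (Set.exists_ne_of_one_lt_ncard hX2' a).choose with hw0def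
    have hw0 : ∀ a, w0 a ∈ X ∧ w0 a ≠ a :=
      fun a => (Set.exists_ne_of_one_lt_ncard hX2' a).choose_spec
    have hedge : ∀ e ∈ M.edgeSet, M.Adj e.out.1 e.out.2 ∧ s(e.out.1, e.out.2) = e := by
      intro e he
      have h1 : s(e.out.1, e.out.2) = e := by
        show Quot.mk _ (e.out.1, e.out.2) = e
        rw [Prod.mk.eta]
        exact Quot.out_eq e
      exact ⟨SimpleGraph.Subgraph.mem_edgeSet.mp (h1.symm ▸ he), h1⟩
    have hkey2 : ∀ e ∈ M.edgeSet, ∀ x ∈ X,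
        ∃ v ξ, v ∈ e ∧ ξ ∈ X ∧ gfun G X w0 (e, x) = s(v, ξ) ∧ ¬ G.Adj v ξ := by
      intro e he x hx
      obtain ⟨hadj, hout⟩ := hedge e he
      have hyM : e.out.1 ∈ M.verts := M.edge_vert hadj
      have hzM : e.out.2 ∈ M.verts := M.edge_vert hadj.symm
      have hyin : e.out.1 ∈ e := Sym2.out_fst_mem e
      have hzin : e.out.2 ∈ e := Sym2.out_snd_mem e
      unfold gfun
      dsimp only
      split_ifs with hy hz hx0
      · obtain ⟨hcX, hcadj⟩ := hy.choose_spec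
        refine ⟨e.out.2, w0 hy.choose, hzin, (hw0 _).1, rfl, fun hcon => ?_⟩
        exact exchange_contra hM hmax hadj (hXmem _ hcX) (hXmem _ (hw0 _).1)
          ((hw0 _).2).symm hcadj hcon
      · obtain ⟨x2, hx2X, hx2a⟩ := hz
        refine ⟨e.out.1, x, hyin, hx, rfl, fun hcon => ?_⟩
        by_cases hxx : x = x2
        · obtain ⟨hcX, hcadj⟩ := hy.choose_spec
          rw [← hxx] at hx2a
          exact exchange_contra hM hmax hadj (hXmem _ hcX) (hXmem _ hx)
            (fun h => hx0 h.symm) hcadj hx2a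
        · exact exchange_contra hM hmax hadj (hXmem _ hx) (hXmem _ hx2X) hxx hcon hx2a
      · exact ⟨e.out.2, x, hzin, hx, rfl, fun hcon => hz ⟨x, hx, hcon⟩⟩
      · exact ⟨e.out.1, x, hyin, hx, rfl, fun hcon => hy ⟨x, hx, hcon⟩⟩
    have hinj_same : ∀ e ∈ M.edgeSet, ∀ x ∈ X, ∀ x' ∈ X,
        gfun G X w0 (e, x) = gfun G X w0 (e, x') → x = x' := by
      intro e he x hx x' hx' heq
      obtain ⟨hadj, hout⟩ := hedge e he
      have hyM : e.out.1 ∈ M.verts := M.edge_vert hadj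
      have hzM : e.out.2 ∈ M.verts := M.edge_vert hadj.symm
      have hne : e.out.1 ≠ e.out.2 := (M.adj_sub hadj).ne
      unfold gfun at heq
      dsimp only at heq
      split_ifs at heq with hy hz h1 h2 h3
      · exact h1.trans h2.symm
      · rcases Sym2.eq_iff.mp heq with ⟨ha, -⟩ | ⟨ha, -⟩
        · exact absurd ha.symm hne
        · exact absurd (ha ▸ hzM) (hXmem _ hx')
      · rcases Sym2.eq_iff.mp heq with ⟨ha, -⟩ | ⟨-, hb⟩
        · exact absurd ha hne
        · exact absurd (hb ▸ hzM) (hXmem _ hx)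
      · rcases Sym2.eq_iff.mp heq with ⟨-, hb⟩ | ⟨ha, -⟩
        · exact hb
        · exact absurd (ha ▸ hyM) (hXmem _ hx')
      · rcases Sym2.eq_iff.mp heq with ⟨-, hb⟩ | ⟨ha, -⟩
        · exact hb
        · exact absurd (ha ▸ hzM) (hXmem _ hx')
      · rcases Sym2.eq_iff.mp heq with ⟨-, hb⟩ | ⟨ha, -⟩
        · exact hb
        · exact absurd (ha ▸ hyM) (hXmem _ hx')
    have hinj : Set.InjOn (gfun G X w0) (M.edgeSet ×ˢ X) := by
      rintro ⟨e, x⟩ ⟨he, hx⟩ ⟨e', x'⟩ ⟨he', hx'⟩ heq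
      have heq0 := heq
      obtain ⟨v, ξ, hv, hξ, hgv, -⟩ := hkey2 e he x hx
      obtain ⟨v', ξ', hv', hξ', hgv', -⟩ := hkey2 e' he' x' hx'
      rw [hgv, hgv'] at heq
      have hvM : v ∈ M.verts := M.mem_verts_of_mem_edge he hv
      have hv'M : v' ∈ M.verts := M.mem_verts_of_mem_edge he' hv'
      rcases Sym2.eq_iff.mp heq with ⟨h1, -⟩ | ⟨h1, -⟩
      · have hee : e = e' := matching_edge_eq hM he he' hv (h1 ▸ hv')
        rw [hee] at heq0 ⊢
        rw [hinj_same e' he' x hx x' hx' heq0]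
      · exact absurd (h1 ▸ hvM) (hXmem _ hξ')
    have hprod : (M.edgeSet ×ˢ X).ncard = M.edgeSet.ncard * X.ncard := by
      rw [← Nat.card_coe_set_eq, Nat.card_congr (Equiv.Set.prod _ _), Nat.card_prod,
        Nat.card_coe_set_eq, Nat.card_coe_set_eq]
    rw [← hprod]
    apply Set.ncard_le_ncard_of_injOn (gfun G X w0) ?_ hinj (Set.toFinite _)
    rintro ⟨e, x⟩ ⟨he, hx⟩
    obtain ⟨v, ξ, hv, hξ, hgv, hnadj⟩ := hkey2 e he x hx
    have hvM : v ∈ M.verts := M.mem_verts_of_mem_edge he hv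
    rw [hgv]
    exact ⟨(SimpleGraph.mem_edgeSet _).mpr ((G.compl_adj _ _).mpr
      ⟨fun h => (hXmem _ hξ) (h ▸ hvM), hnadj⟩),
      v, Sym2.mem_mk_left _ _, hvM⟩
  calc Nat.choose X.ncard 2 + M.edgeSet.ncard * X.ncard
      ≤ T1.ncard + T2.ncard := Nat.add_le_add hb1 hb2
    _ ≤ Gᶜ.edgeSet.ncard := hkey
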